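/- arXiv:math/0602591 — 10 statements merged into one kernel-verified Lean document; each statement's English description precedes it below -/
import Mathlib

section
/- Let n > 3 be an odd integer. Among all integers m with 1 < m < n, gcd(m, n) = 1 and gcd(m − 1, n) = 1, there is exactly one for which the loop L_n(m) is commutative, namely m = (n + 1)/2; in particular, for m = (n + 1)/2 one indeed has gcd(m, n) = 1 and gcd(m − 1, n) = 1. -/
/-- The loop `L_n(m)`: carrier `{e} ∪ {1, …, n}`, modeled as `Option (ZMod n)`
with `none` playing the role of the identity `e` and the nonidentity elements
`{1, …, n}` identified with their residues in `ZMod n`.  For distinct nonidentity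
`i, j` the product is `m·j − (m−1)·i (mod n)`. -/
def lmul (n m : ℕ) : Option (ZMod n) → Option (ZMod n) → Option (ZMod n)
  | none, x => x
  | some i, none => some i
  | some i, some j =>
      if i = j then none
      else some ((m : ZMod n) * j - ((m : ZMod n) - 1) * i)

/-- For odd `n > 3`, among all admissible `m` (`1 < m < n`, `gcd(m,n) = 1`,
`gcd(m-1,n) = 1`) exactly one gives a commutative loop `L_n(m)`, namely
`m = (n+1)/2`; moreover `m = (n+1)/2` is indeed admissible. -/
theorem stmt1 (n : ℕ) (hn : 3 < n) (hodd : Odd n) :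
    (∀ m : ℕ, 1 < m → m < n → Nat.gcd m n = 1 → Nat.gcd (m - 1) n = 1 →
      ((∀ x y : Option (ZMod n), lmul n m x y = lmul n m y x) ↔ m = (n + 1) / 2)) ∧
    1 < (n + 1) / 2 ∧ (n + 1) / 2 < n ∧
    Nat.gcd ((n + 1) / 2) n = 1 ∧ Nat.gcd ((n + 1) / 2 - 1) n = 1 := by
  obtain ⟨k, hk⟩ := hodd
  haveI : Fact (1 < n) := ⟨by omega⟩
  haveI : NeZero n := ⟨by omega⟩
  refine ⟨?_, by omega, by omega, ?_, ?_⟩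
  · intro m hm1 hmn hg1 hg2
    constructor
    · intro hcomm
      have h := hcomm (some 0) (some 1)
      have h01 : (0 : ZMod n) ≠ 1 := zero_ne_one
      simp only [lmul, if_neg h01, if_neg (Ne.symm h01)] at h
      have h' : ((2 * m : ℕ) : ZMod n) = ((1 : ℕ) : ZMod n) := by
        have := Option.some_injective _ h
        push_cast
        linear_combination this
      have hmod : 2 * m ≡ 1 [MOD n] := (ZMod.natCast_eq_natCast_iff _ _ _).mp h'
      have hdvd : n ∣ 2 * m - 1 := (Nat.modEq_iff_dvd' (by omega)).mp hmod.symm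
      obtain ⟨c, hc⟩ := hdvd
      have hc1 : c = 1 := by
        have h0 : 0 < c := by
          rcases Nat.eq_zero_or_pos c with h | h
          · subst h; simp at hc; omega
          · exact h
        have h2 : c < 2 := by
          by_contra h
          push_neg at h
          have := Nat.mul_le_mul_left n h
          omega
        omega
      subst hc1
      omega
    · intro hm
      have h2m : 2 * m = n + 1 := by omega
      have key : (2 : ZMod n) * (m : ℕ) = 1 := by
        have : ((2 * m : ℕ) : ZMod n) = ((n + 1 : ℕ) : ZMod n) := by rw [h2m]
        push_cast [ZMod.natCast_self] at this
        linear_combination this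
      intro x y
      match x, y with
      | none, none => rfl
      | none, some j => rfl
      | some i, none => rfl
      | some i, some j =>
        by_cases hij : i = j
        · simp [lmul, hij]
        · simp only [lmul, if_neg hij, if_neg (Ne.symm hij), Option.some.injEq]
          linear_combination (j - i) * key
  · have h1 := Nat.gcd_dvd_left ((n + 1) / 2) n
    have h2 := Nat.gcd_dvd_right ((n + 1) / 2) n
    have h3 : Nat.gcd ((n + 1) / 2) n ∣ 1 := by
      have := Nat.dvd_sub (h1.mul_left 2) h2
      have he : 2 * ((n + 1) / 2) - n = 1 := by omega
      rwa [he] at this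
    exact Nat.dvd_one.mp h3
  · have h1 := Nat.gcd_dvd_left ((n + 1) / 2 - 1) n
    have h2 := Nat.gcd_dvd_right ((n + 1) / 2 - 1) n
    have h3 : Nat.gcd ((n + 1) / 2 - 1) n ∣ 1 := by
      have := Nat.dvd_sub h2 (h1.mul_left 2)
      have he : n - 2 * ((n + 1) / 2 - 1) = 1 := by omega
      rwa [he] at this
    exact Nat.dvd_one.mp h3
end

section
/- Let n > 3 be an odd integer with prime factorization n = p_1^{α_1} p_2^{α_2} ⋯ p_k^{α_k}. Then the number of integers m with 1 < m < n, gcd(m, n) = 1 and gcd(m − 1, n) = 1 for which the loop L_n(m) is strictly non-commutative equals F_n = ∏_{i=1}^{k} (p_i − 3) p_i^{α_i − 1}. -/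
/-!
For `i ≠ j` in `ℤ/n`, `i * j = j * i` in `L_n(m)` iff `(2m - 1)(j - i) = 0`, so `L_n(m)` is
strictly non-commutative iff `2m - 1` is a unit mod `n`. The count is therefore the number of
`a ∈ ℤ/n` with `a`, `a - 1` and `2a - 1` all units, which is multiplicative by the Chinese
remainder theorem. Modulo `p^α` a residue is a unit iff it is one modulo `p`, so each of the
`p - 3` residues mod `p` outside `{0, 1, 1/2}` lifts to `p^(α-1)` admissible residues.
-/

open Function

theorem AddMonoidHom.card_preimage_of_surjective {G H : Type*} [AddGroup G] [AddGroup H]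
    {f : G →+ H} (hf : Surjective f) (t : Set H) :
    Nat.card (f ⁻¹' t) = Nat.card f.ker * Nat.card t := by
  rw [← Nat.card_prod]
  apply Nat.card_congr
  let g := surjInv hf
  have hg : ∀ b, f (g b) = b := surjInv_eq hf
  exact
    { toFun := fun a => (⟨a - g (f a), by simp [hg]⟩, ⟨f a, a.2⟩)
      invFun := fun kb => ⟨kb.1 + g kb.2, by simp [hg, f.mem_ker.mp kb.1.2]⟩
      left_inv := fun a => by simp
      right_inv := fun kb => by ext <;> simp [hg, f.mem_ker.mp kb.1.2] }

/-- The parameters `m` for which `L_n(m)` is defined and strictly non-commutative, with `ZMod n`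
replaced by an arbitrary ring. -/
def strictNoncommParams (R : Type*) [Ring R] : Set R :=
  {a | IsUnit a ∧ IsUnit (a - 1) ∧ IsUnit (2 * a - 1)}

section strictNoncommParams

variable {R S : Type*} [CommRing R] [CommRing S]

theorem preimage_strictNoncommParams {F : Type*} [FunLike F R S] [RingHomClass F R S] (f : F)
    [IsLocalHom f] : f ⁻¹' strictNoncommParams S = strictNoncommParams R := by
  ext a
  change IsUnit (f a) ∧ IsUnit (f a - 1) ∧ IsUnit (2 * f a - 1) ↔ _
  rw [← map_one f, ← map_sub, ← map_ofNat f 2, ← map_mul, ← map_sub, isUnit_map_iff,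
    isUnit_map_iff, isUnit_map_iff]
  rfl

theorem card_strictNoncommParams_congr (e : R ≃+* S) :
    Nat.card (strictNoncommParams R) = Nat.card (strictNoncommParams S) := by
  rw [← preimage_strictNoncommParams e, Nat.card_preimage_of_injective e.injective
    (by simp [e.surjective.range_eq])]

theorem strictNoncommParams_prod :
    strictNoncommParams (R × S) = strictNoncommParams R ×ˢ strictNoncommParams S := by
  ext ⟨a, b⟩
  simp only [strictNoncommParams, Set.mem_ofPred_eq, Set.mem_prod, Prod.isUnit_iff,
    Prod.fst_sub, Prod.snd_sub, Prod.fst_mul, Prod.snd_mul, Prod.fst_one, Prod.snd_one,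
    Prod.fst_ofNat, Prod.snd_ofNat]
  tauto

theorem card_strictNoncommParams_prod :
    Nat.card (strictNoncommParams (R × S)) =
      Nat.card (strictNoncommParams R) * Nat.card (strictNoncommParams S) := by
  rw [strictNoncommParams_prod, ← Nat.card_prod, Nat.card_congr (Equiv.Set.prod _ _)]

theorem card_strictNoncommParams_of_surjective (f : R →+* S) [IsLocalHom f]
    (hf : Surjective f) :
    Nat.card (strictNoncommParams R) =
      Nat.card (f : R →+ S).ker * Nat.card (strictNoncommParams S) := by
  rw [← preimage_strictNoncommParams f]
  exact AddMonoidHom.card_preimage_of_surjective (f := (f : R →+ S)) hf _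

theorem strictNoncommParams_eq_compl {K : Type*} [Field K] (h2 : (2 : K) ≠ 0) :
    strictNoncommParams K = {0, 1, 2⁻¹}ᶜ := by
  ext a
  simp [strictNoncommParams, sub_eq_zero, mul_comm, mul_eq_one_iff_eq_inv₀ h2]

theorem card_strictNoncommParams_of_field {K : Type*} [Field K] [Finite K] (h2 : (2 : K) ≠ 0) :
    Nat.card (strictNoncommParams K) = Nat.card K - 3 := by
  have h3 : ({0, 1, 2⁻¹} : Set K).ncard = 3 := by
    refine Set.ncard_eq_three.mpr ⟨0, 1, 2⁻¹, zero_ne_one, ?_, ?_, rfl⟩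
    · simpa using h2.symm
    · intro h
      rw [← mul_eq_one_iff_eq_inv₀ h2, one_mul] at h
      exact one_ne_zero (α := K) (by linear_combination h)
  rw [strictNoncommParams_eq_compl h2, Nat.card_coe_set_eq, Set.ncard_compl, h3]

end strictNoncommParams

namespace ZMod

theorem isLocalHom_castHom_pow (p : ℕ) [NeZero p] {k : ℕ} (hk : k ≠ 0) :
    IsLocalHom (castHom (dvd_pow_self p hk) (ZMod p)) := by
  refine ⟨fun a ha => ?_⟩
  rw [← natCast_zmod_val a] at ha ⊢
  rw [map_natCast, isUnit_iff_coprime] at ha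
  rw [isUnit_iff_coprime]
  exact ha.pow_right k

theorem card_ker_castHom_pow (p : ℕ) [NeZero p] {k : ℕ} (hk : k ≠ 0) :
    Nat.card (castHom (dvd_pow_self p hk) (ZMod p) : ZMod (p ^ k) →+ ZMod p).ker =
      p ^ (k - 1) := by
  have h := AddMonoidHom.card_preimage_of_surjective
    (f := (castHom (dvd_pow_self p hk) (ZMod p) : ZMod (p ^ k) →+ ZMod p))
    (castHom_surjective (dvd_pow_self p hk)) Set.univ
  rw [Set.preimage_univ, Nat.card_univ, Nat.card_univ, Nat.card_zmod, Nat.card_zmod] at h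
  exact Nat.eq_of_mul_eq_mul_right (Nat.pos_of_ne_zero (NeZero.ne p))
    (h.symm.trans (Nat.pow_pred_mul (Nat.pos_of_ne_zero hk)).symm)

theorem card_strictNoncommParams_prime_pow {p k : ℕ} [Fact p.Prime] (hp2 : p ≠ 2)
    (hk : k ≠ 0) : Nat.card (strictNoncommParams (ZMod (p ^ k))) = (p - 3) * p ^ (k - 1) := by
  have := isLocalHom_castHom_pow p hk
  have h2 : (2 : ZMod p) ≠ 0 := Ring.two_ne_zero (by rwa [ringChar_zmod_n])
  rw [card_strictNoncommParams_of_surjective _ (castHom_surjective (dvd_pow_self p hk)),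
    card_ker_castHom_pow p hk, card_strictNoncommParams_of_field h2, Nat.card_zmod, mul_comm]

theorem card_strictNoncommParams_mul {x y : ℕ} (h : x.Coprime y) :
    Nat.card (strictNoncommParams (ZMod (x * y))) =
      Nat.card (strictNoncommParams (ZMod x)) * Nat.card (strictNoncommParams (ZMod y)) := by
  rw [card_strictNoncommParams_congr (chineseRemainder h), card_strictNoncommParams_prod]

theorem card_strictNoncommParams_one : Nat.card (strictNoncommParams (ZMod 1)) = 1 := by
  rw [Set.eq_univ_of_forall (s := strictNoncommParams (ZMod 1)) fun a =>
    ⟨isUnit_of_subsingleton a, isUnit_of_subsingleton _, isUnit_of_subsingleton _⟩,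
    Nat.card_univ, Nat.card_zmod]

theorem card_strictNoncommParams_of_odd {n : ℕ} (hn : Odd n) :
    Nat.card (strictNoncommParams (ZMod n)) =
      ∏ p ∈ n.primeFactors, (p - 3) * p ^ (n.factorization p - 1) := by
  rw [Nat.multiplicative_factorization (fun n => Nat.card (strictNoncommParams (ZMod n)))
    (fun _ _ => card_strictNoncommParams_mul) card_strictNoncommParams_one hn.pos.ne',
    Finsupp.prod, Nat.support_factorization]
  refine Finset.prod_congr rfl fun p hp => ?_
  have := Fact.mk (Nat.prime_of_mem_primeFactors hp)
  have hp2 : p ≠ 2 := by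
    rintro rfl
    exact Nat.not_even_iff_odd.mpr hn (even_iff_two_dvd.mpr (Nat.dvd_of_mem_primeFactors hp))
  exact card_strictNoncommParams_prime_pow hp2
    (Finsupp.mem_support_iff.mp (n.support_factorization ▸ hp))

end ZMod

section lmul

variable {n m : ℕ}

theorem lmul_some_of_ne {i j : ZMod n} (h : i ≠ j) :
    lmul n m (some i) (some j) = some (m * j - (m - 1) * i) :=
  if_neg h

theorem lmul_some_comm_iff {i j : ZMod n} (h : i ≠ j) :
    lmul n m (some i) (some j) = lmul n m (some j) (some i) ↔
      (2 * (m : ZMod n) - 1) * (j - i) = 0 := by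
  rw [lmul_some_of_ne h, lmul_some_of_ne h.symm, Option.some_inj]
  constructor <;> intro h <;> linear_combination h

theorem lmul_strictlyNoncomm_iff [NeZero n] :
    (∀ x y : Option (ZMod n), x ≠ none → y ≠ none → x ≠ y →
        lmul n m x y ≠ lmul n m y x) ↔
      IsUnit (2 * (m : ZMod n) - 1) := by
  rw [isUnit_iff_mem_nonZeroDivisors_of_finite, mem_nonZeroDivisors_iff_left]
  constructor
  · intro H d hd
    by_contra hd0
    refine H (some 0) (some d) (by simp) (by simp) (by simpa using Ne.symm hd0) ?_
    exact (lmul_some_comm_iff (Ne.symm hd0)).mpr (by simpa using hd)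
  · rintro H (_ | i) (_ | j) hx hy hne <;> try contradiction
    have hij : i ≠ j := fun h => hne (congrArg some h)
    exact fun hc => hij (sub_eq_zero.mp (H _ ((lmul_some_comm_iff hij).mp hc))).symm

theorem natCast_mem_strictNoncommParams_iff {a : ℕ} (ha : 1 ≤ a) :
    (a : ZMod n) ∈ strictNoncommParams (ZMod n) ↔
      a.gcd n = 1 ∧ (a - 1).gcd n = 1 ∧ IsUnit (2 * (a : ZMod n) - 1) := by
  rw [strictNoncommParams, Set.mem_ofPred_eq, ← Nat.cast_pred ha, ZMod.isUnit_iff_coprime,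
    ZMod.isUnit_iff_coprime]

theorem card_nat_lt_eq_card_strictNoncommParams (hn : 1 < n) :
    Nat.card {m : ℕ // 1 < m ∧ m < n ∧ m.gcd n = 1 ∧ (m - 1).gcd n = 1 ∧
      IsUnit (2 * (m : ZMod n) - 1)} = Nat.card (strictNoncommParams (ZMod n)) := by
  have : Fact (1 < n) := ⟨hn⟩
  refine Nat.card_eq_of_bijective
    (fun m => ⟨m.1, (natCast_mem_strictNoncommParams_iff m.2.1.le).mpr m.2.2.2⟩) ⟨?_, ?_⟩
  · rintro ⟨a, ha⟩ ⟨b, hb⟩ hab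
    have := congrArg (fun x => (x.1 : ZMod n).val) hab
    simpa [ZMod.val_cast_of_lt ha.2.1, ZMod.val_cast_of_lt hb.2.1] using this
  · rintro ⟨a, ha⟩
    have hval : 1 < a.val := by
      have h0 : a.val ≠ 0 := (ZMod.val_ne_zero a).mpr ha.1.ne_zero
      have h1 : a.val ≠ 1 := (ZMod.val_eq_one hn a).not.mpr
        fun h => ha.2.1.ne_zero (sub_eq_zero.mpr h)
      omega
    refine ⟨⟨a.val, hval, a.val_lt, (natCast_mem_strictNoncommParams_iff hval.le).mp ?_⟩,
      Subtype.ext (ZMod.natCast_zmod_val a)⟩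
    rwa [ZMod.natCast_zmod_val]

end lmul

/-- For odd `n > 3` with prime factorization `n = ∏ pᵢ^αᵢ`, the number of
admissible `m` for which `L_n(m)` is strictly non-commutative (i.e. `x*y ≠ y*x`
for all distinct nonidentity `x, y`) equals `F_n = ∏ (pᵢ - 3) pᵢ^(αᵢ - 1)`. -/
theorem stmt2 (n : ℕ) (hn : 3 < n) (hodd : Odd n) :
    Nat.card {m : ℕ // 1 < m ∧ m < n ∧ Nat.gcd m n = 1 ∧ Nat.gcd (m - 1) n = 1 ∧
      ∀ x y : Option (ZMod n), x ≠ none → y ≠ none → x ≠ y →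
        lmul n m x y ≠ lmul n m y x} =
      ∏ p ∈ n.primeFactors, (p - 3) * p ^ (n.factorization p - 1) := by
  have : NeZero n := ⟨by omega⟩
  simp_rw [lmul_strictlyNoncomm_iff]
  rw [card_nat_lt_eq_card_strictNoncommParams (by omega),
    ZMod.card_strictNoncommParams_of_odd hodd]
end

section
/- Let n = p be a prime with p ≥ 5. Then every loop in the class L_n is either commutative or strictly non-commutative; that is, for every integer m with 1 < m < n, gcd(m, n) = 1 and gcd(m − 1, n) = 1, either x * y = y * x for all x, y ∈ L_n(m), or x * y ≠ y * x for all x, y ∈ L_n(m) \ {e} with x ≠ y. -/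
/-- For `n = p` a prime with `p ≥ 5`, every loop in the class `L_n` is either
commutative or strictly non-commutative. -/
theorem stmt3 (n : ℕ) (hp : Nat.Prime n) (hn : 5 ≤ n) :
    ∀ m : ℕ, 1 < m → m < n → Nat.gcd m n = 1 → Nat.gcd (m - 1) n = 1 →
      (∀ x y : Option (ZMod n), lmul n m x y = lmul n m y x) ∨
      (∀ x y : Option (ZMod n), x ≠ none → y ≠ none → x ≠ y →
        lmul n m x y ≠ lmul n m y x) := by
  intro m _ _ _ _
  haveI : Fact (Nat.Prime n) := ⟨hp⟩
  by_cases h : (2 : ZMod n) * (m : ZMod n) - 1 = 0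
  · left
    rintro (_ | i) (_ | j)
    · rfl
    · rfl
    · rfl
    · simp only [lmul]
      by_cases hij : i = j
      · simp [hij]
      · rw [if_neg hij, if_neg (fun hji => hij hji.symm)]
        congr 1
        linear_combination (j - i) * h
  · right
    rintro (_ | i) (_ | j) hx hy hxy heq
    · exact hx rfl
    · exact hx rfl
    · exact hy rfl
    have hij : i ≠ j := fun hh => hxy (by rw [hh])
    simp only [lmul] at heq
    rw [if_neg hij, if_neg (Ne.symm hij)] at heq
    injection heq with heq
    apply h
    have : ((2 : ZMod n) * m - 1) * (j - i) = 0 := by linear_combination heq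
    rcases mul_eq_zero.mp this with h' | h'
    · exact h'
    · exact absurd (sub_eq_zero.mp h').symm hij
end

section
/- Let n > 3 be an odd integer divisible by 3. Then the class L_n contains no strictly non-commutative loop; that is, for every integer m with 1 < m < n, gcd(m, n) = 1 and gcd(m − 1, n) = 1, there exist x, y ∈ L_n(m) \ {e} with x ≠ y and x * y = y * x. -/
/-- For odd `n > 3` divisible by `3`, the class `L_n` contains no strictly
non-commutative loop: for every admissible `m` there exist distinct nonidentity
`x, y` in `L_n(m)` with `x * y = y * x`. -/
theorem stmt4 (n : ℕ) (hn : 3 < n) (hodd : Odd n) (h3 : 3 ∣ n) :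
    ∀ m : ℕ, 1 < m → m < n → Nat.gcd m n = 1 → Nat.gcd (m - 1) n = 1 →
      ∃ x y : Option (ZMod n), x ≠ none ∧ y ≠ none ∧ x ≠ y ∧
        lmul n m x y = lmul n m y x := by
  intro m hm1 hmn hg1 hg2
  have hn0 : 0 < n := by omega
  haveI : NeZero n := ⟨by omega⟩
  -- 3 ∤ m and 3 ∤ (m-1)
  have h3m : ¬ (3 ∣ m) := by
    intro h
    have : 3 ∣ Nat.gcd m n := Nat.dvd_gcd h h3
    omega
  have h3m1 : ¬ (3 ∣ (m - 1)) := by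
    intro h
    have : 3 ∣ Nat.gcd (m - 1) n := Nat.dvd_gcd h h3
    omega
  have hdvd : 3 ∣ 2 * m - 1 := by
    have hlt : m % 3 < 3 := Nat.mod_lt m (by norm_num)
    rcases (by omega : m % 3 = 0 ∨ m % 3 = 1 ∨ m % 3 = 2) with h | h | h
    · exact absurd (Nat.dvd_of_mod_eq_zero h) h3m
    · exact absurd (by omega : 3 ∣ m - 1) h3m1
    · omega
  set d : ℕ := n / 3 with hd
  have hnd : n = 3 * d := (Nat.div_mul_cancel h3).symm.trans (by ring)
  have hd0 : 0 < d := by omega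
  have hdn : d < n := by omega
  -- key: (2m-1) * d ≡ 0 mod n
  have hkey : ((2 * m - 1 : ℕ) : ZMod n) * ((d : ℕ) : ZMod n) = 0 := by
    rw [← Nat.cast_mul, ZMod.natCast_eq_zero_iff]
    obtain ⟨k, hk⟩ := hdvd
    exact ⟨k, by rw [hk, hnd]; ring⟩
  have hdne : ((d : ℕ) : ZMod n) ≠ 0 := by
    rw [Ne, ZMod.natCast_eq_zero_iff]
    intro h
    exact absurd (Nat.le_of_dvd hd0 h) (by omega)
  refine ⟨some 0, some ((d : ℕ) : ZMod n), by simp, by simp, by simpa using (Ne.symm hdne), ?_⟩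
  have h01 : (0 : ZMod n) ≠ ((d : ℕ) : ZMod n) := Ne.symm hdne
  simp only [lmul, if_neg h01, if_neg (Ne.symm h01)]
  congr 1
  have hcast : ((2 * m - 1 : ℕ) : ZMod n) = 2 * (m : ZMod n) - 1 := by
    push_cast [Nat.cast_sub (by omega : 1 ≤ 2 * m)]
    ring
  rw [hcast] at hkey
  linear_combination hkey
end

section
/- Let n > 3 be an odd integer. Then the class L_n contains exactly one right alternative loop and exactly one left alternative loop, and no alternative loop. Precisely: among all integers m with 1 < m < n, gcd(m, n) = 1 and gcd(m − 1, n) = 1, the loop L_n(m) is right alternative if and only if m = 2, it is left alternative if and only if m = n − 1, and for no admissible m is L_n(m) both left and right alternative. -/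
lemma lmul_none_left (n m : ℕ) (x : Option (ZMod n)) : lmul n m none x = x := rfl

lemma lmul_none_right (n m : ℕ) (i : ZMod n) : lmul n m (some i) none = some i := rfl

lemma lmul_same (n m : ℕ) (i : ZMod n) : lmul n m (some i) (some i) = none := by
  simp [lmul]

lemma lmul_ne (n m : ℕ) {i j : ZMod n} (h : i ≠ j) :
    lmul n m (some i) (some j) = some ((m : ZMod n) * j - ((m : ZMod n) - 1) * i) := by
  simp [lmul, h]

/-- For odd `n > 3`: among the admissible `m`, `L_n(m)` is right alternative iff
`m = 2`, left alternative iff `m = n - 1`, and never both left and right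
alternative; so `L_n` contains exactly one right alternative loop, exactly one
left alternative loop, and no alternative loop. -/
theorem stmt5 (n : ℕ) (hn : 3 < n) (hodd : Odd n) :
    ∀ m : ℕ, 1 < m → m < n → Nat.gcd m n = 1 → Nat.gcd (m - 1) n = 1 →
      ((∀ x y : Option (ZMod n),
          lmul n m (lmul n m x y) y = lmul n m x (lmul n m y y)) ↔ m = 2) ∧
      ((∀ x y : Option (ZMod n),
          lmul n m (lmul n m x x) y = lmul n m x (lmul n m x y)) ↔ m = n - 1) ∧
      ¬ ((∀ x y : Option (ZMod n),
            lmul n m (lmul n m x x) y = lmul n m x (lmul n m x y)) ∧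
         (∀ x y : Option (ZMod n),
            lmul n m (lmul n m x y) y = lmul n m x (lmul n m y y))) := by
  intro m hm1 hmn hg1 hg2
  haveI : NeZero n := ⟨by omega⟩
  haveI : Fact (1 < n) := ⟨by omega⟩
  have hMu : IsUnit ((m : ZMod n)) := (ZMod.isUnit_iff_coprime m n).2 hg1
  have hcast : ((m - 1 : ℕ) : ZMod n) = (m : ZMod n) - 1 := by
    have h1 : (1 : ℕ) ≤ m := by omega
    push_cast [Nat.cast_sub h1]
    ring
  have hM1u : IsUnit ((m : ZMod n) - 1) :=
    hcast ▸ (ZMod.isUnit_iff_coprime (m - 1) n).2 hg2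
  have h01 : (0 : ZMod n) ≠ 1 := zero_ne_one
  have castlt : ∀ a b : ℕ, a < n → b < n → (a : ZMod n) = (b : ZMod n) → a = b := by
    intro a b ha hb h
    have h' : a % n = b % n := (ZMod.natCast_eq_natCast_iff a b n).1 h
    have h1 : a % n = a := Nat.mod_eq_of_lt ha
    have h2 : b % n = b := Nat.mod_eq_of_lt hb
    omega
  have hRA : (∀ x y : Option (ZMod n),
      lmul n m (lmul n m x y) y = lmul n m x (lmul n m y y)) ↔ m = 2 := by
    constructor
    · intro h
      have key := h (some 0) (some 1)
      rw [lmul_ne n m h01, lmul_same, lmul_none_right] at key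
      have hMne1 : (m : ZMod n) * 1 - ((m : ZMod n) - 1) * 0 ≠ 1 := by
        intro hc
        apply hM1u.ne_zero
        linear_combination hc
      rw [lmul_ne n m hMne1] at key
      simp only [Option.some.injEq] at key
      have hM2 : (m : ZMod n) - 2 = 0 := by
        have h0 : (m : ZMod n) * ((m : ZMod n) - 2) = 0 := by linear_combination -key
        exact (hMu.mul_right_eq_zero).1 h0
      have : (m : ZMod n) = ((2 : ℕ) : ZMod n) := by
        push_cast
        linear_combination hM2
      exact castlt m 2 hmn (by omega) this
    · rintro rfl
      intro x y
      match x, y with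
      | none, y => simp [lmul_none_left]
      | some i, none => simp [lmul_none_right, lmul_none_left]
      | some i, some j =>
        by_cases hij : i = j
        · subst hij
          simp [lmul_same, lmul_none_left, lmul_none_right]
        · rw [lmul_ne n 2 hij, lmul_same, lmul_none_right]
          have ht : (2 : ℕ) * j - (((2:ℕ) : ZMod n) - 1) * i ≠ j := by
            intro hc
            apply hij
            push_cast at hc
            linear_combination -hc
          rw [lmul_ne n 2 ht]
          congr 1
          push_cast
          ring
  have hLA : (∀ x y : Option (ZMod n),
      lmul n m (lmul n m x x) y = lmul n m x (lmul n m x y)) ↔ m = n - 1 := by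
    constructor
    · intro h
      have key := h (some 0) (some 1)
      rw [lmul_same, lmul_none_left, lmul_ne n m h01] at key
      have hMne0 : (0 : ZMod n) ≠ (m : ZMod n) * 1 - ((m : ZMod n) - 1) * 0 := by
        intro hc
        apply hMu.ne_zero
        linear_combination -hc
      rw [lmul_ne n m hMne0] at key
      simp only [Option.some.injEq] at key
      have hM2 : (m : ZMod n) + 1 = 0 := by
        have h0 : ((m : ZMod n) - 1) * ((m : ZMod n) + 1) = 0 := by
          linear_combination -key
        exact (hM1u.mul_right_eq_zero).1 h0
      have hsub : ((n - 1 : ℕ) : ZMod n) = -1 := by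
        have h1 : (1 : ℕ) ≤ n := by omega
        push_cast [Nat.cast_sub h1]
        simp
      have : (m : ZMod n) = ((n - 1 : ℕ) : ZMod n) := by
        rw [hsub]
        linear_combination hM2
      exact castlt m (n - 1) hmn (by omega) this
    · rintro rfl
      have hMeq : ((n - 1 : ℕ) : ZMod n) = -1 := by
        have h1 : (1 : ℕ) ≤ n := by omega
        push_cast [Nat.cast_sub h1]
        simp
      intro x y
      match x, y with
      | none, y => simp [lmul_none_left]
      | some i, none => simp [lmul_same, lmul_none_left, lmul_none_right]
      | some i, some j =>
        by_cases hij : i = j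
        · subst hij
          simp [lmul_same, lmul_none_left, lmul_none_right]
        · rw [lmul_same, lmul_none_left, lmul_ne n (n-1) hij]
          have ht : i ≠ ((n - 1 : ℕ) : ZMod n) * j - (((n - 1 : ℕ) : ZMod n) - 1) * i := by
            rw [hMeq]
            intro hc
            apply hij
            linear_combination -hc
          rw [lmul_ne n (n-1) ht, hMeq]
          congr 1
          ring
  refine ⟨hRA, hLA, ?_⟩
  rintro ⟨hl, hr⟩
  have h2 := hRA.1 hr
  have hn1 := hLA.1 hl
  omega
end

section
/- Let n > 3 be an odd integer. Then the class L_n contains no Moufang loop: for every integer m with 1 < m < n, gcd(m, n) = 1 and gcd(m − 1, n) = 1, there exist x, y, z ∈ L_n(m) with (x * y) * (z * x) ≠ (x * (y * z)) * x. -/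
/-- For odd `n > 3`, the class `L_n` contains no Moufang loop: for every
admissible `m` there exist `x, y, z` with `(x*y)*(z*x) ≠ (x*(y*z))*x`. -/
theorem stmt6 (n : ℕ) (hn : 3 < n) (hodd : Odd n) :
    ∀ m : ℕ, 1 < m → m < n → Nat.gcd m n = 1 → Nat.gcd (m - 1) n = 1 →
      ∃ x y z : Option (ZMod n),
        lmul n m (lmul n m x y) (lmul n m z x) ≠
          lmul n m (lmul n m x (lmul n m y z)) x := by
  intro m hm1 hmn hg1 hg2
  have hn5 : n = 5 ∨ 5 < n := by
    rcases hodd with ⟨k, hk⟩; omega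
  rcases hn5 with h5 | h5
  · subst h5
    interval_cases m <;> decide
  · haveI : NeZero n := ⟨by omega⟩
    haveI : Fact (1 < n) := ⟨by omega⟩
    have hMu : IsUnit ((m : ZMod n)) := by
      rw [ZMod.isUnit_iff_coprime]; exact hg1
    have hKu : IsUnit ((m : ZMod n) - 1) := by
      have hc : ((m - 1 : ℕ) : ZMod n) = (m : ZMod n) - 1 := by
        rw [Nat.cast_sub (by omega : 1 ≤ m), Nat.cast_one]
      rw [← hc, ZMod.isUnit_iff_coprime]; exact hg2
    have hMne : (m : ZMod n) ≠ 0 := hMu.ne_zero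
    have hKne : (m : ZMod n) - 1 ≠ 0 := hKu.ne_zero
    have hMinv : (m : ZMod n) * (m : ZMod n)⁻¹ = 1 := ZMod.mul_inv_of_unit _ hMu
    have hKinv : ((m : ZMod n) - 1) * ((m : ZMod n) - 1)⁻¹ = 1 :=
      ZMod.mul_inv_of_unit _ hKu
    obtain ⟨y, hyS⟩ : ∃ y : ZMod n,
        y ∉ ({0, 1, (m : ZMod n) * ((m : ZMod n) - 1)⁻¹,
          -((m : ZMod n) - 1) * (m : ZMod n)⁻¹,
          ((m : ZMod n) - 1) * (m : ZMod n)⁻¹} : Finset (ZMod n)) := by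
      by_contra hc
      push_neg at hc
      have hsub : (Finset.univ : Finset (ZMod n)) ⊆ _ := fun z _ => hc z
      have hcard := Finset.card_le_card hsub
      rw [Finset.card_univ, ZMod.card] at hcard
      have a1 := Finset.card_insert_le (0 : ZMod n)
        ({1, (m : ZMod n) * ((m : ZMod n) - 1)⁻¹,
          -((m : ZMod n) - 1) * (m : ZMod n)⁻¹,
          ((m : ZMod n) - 1) * (m : ZMod n)⁻¹} : Finset (ZMod n))
      have a2 := Finset.card_insert_le (1 : ZMod n)
        ({(m : ZMod n) * ((m : ZMod n) - 1)⁻¹,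
          -((m : ZMod n) - 1) * (m : ZMod n)⁻¹,
          ((m : ZMod n) - 1) * (m : ZMod n)⁻¹} : Finset (ZMod n))
      have a3 := Finset.card_insert_le ((m : ZMod n) * ((m : ZMod n) - 1)⁻¹)
        ({-((m : ZMod n) - 1) * (m : ZMod n)⁻¹,
          ((m : ZMod n) - 1) * (m : ZMod n)⁻¹} : Finset (ZMod n))
      have a4 := Finset.card_insert_le (-((m : ZMod n) - 1) * (m : ZMod n)⁻¹)
        ({((m : ZMod n) - 1) * (m : ZMod n)⁻¹} : Finset (ZMod n))
      have a5 : ({((m : ZMod n) - 1) * (m : ZMod n)⁻¹} : Finset (ZMod n)).card = 1 :=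
        Finset.card_singleton _
      omega
    simp only [Finset.mem_insert, Finset.mem_singleton, not_or] at hyS
    obtain ⟨hy0, hy1, hya, hyb, hyc⟩ := hyS
    have cancel : ∀ u v : ZMod n, u * u⁻¹ = 1 → u * y = v → y = v * u⁻¹ := by
      intro u v hu h
      rw [← h, mul_comm u y, mul_assoc, hu, mul_one]
    have hy3 : ((m : ZMod n) - 1) * y ≠ (m : ZMod n) :=
      fun h => hya (cancel _ _ hKinv h)
    have hy4 : (m : ZMod n) * y ≠ -((m : ZMod n) - 1) := by
      intro h
      exact hyb (by rw [cancel _ _ hMinv h])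
    have hy5 : (m : ZMod n) * y ≠ (m : ZMod n) - 1 :=
      fun h => hyc (cancel _ _ hMinv h)
    refine ⟨some 0, some y, some 1, ?_⟩
    have e1 : lmul n m (some 0) (some y) = some ((m : ZMod n) * y) := by
      simp only [lmul]
      rw [if_neg (Ne.symm hy0)]
      exact congrArg some (by ring)
    have e2 : lmul n m (some 1) (some 0) = some (-((m : ZMod n) - 1)) := by
      simp only [lmul]
      rw [if_neg (one_ne_zero : (1 : ZMod n) ≠ 0)]
      exact congrArg some (by ring)
    have e3 : lmul n m (some y) (some 1)
        = some ((m : ZMod n) - ((m : ZMod n) - 1) * y) := by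
      simp only [lmul]
      rw [if_neg hy1]
      exact congrArg some (by ring)
    have hw : (m : ZMod n) - ((m : ZMod n) - 1) * y ≠ 0 := by
      intro h
      exact hy3 (by linear_combination -h)
    have e4 : lmul n m (some 0) (some ((m : ZMod n) - ((m : ZMod n) - 1) * y))
        = some ((m : ZMod n) * ((m : ZMod n) - ((m : ZMod n) - 1) * y)) := by
      simp only [lmul]
      rw [if_neg (Ne.symm hw)]
      exact congrArg some (by ring)
    have hMw : (m : ZMod n) * ((m : ZMod n) - ((m : ZMod n) - 1) * y) ≠ 0 := by
      intro h
      apply hw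
      have h2 := congrArg (fun t => (m : ZMod n)⁻¹ * t) h
      simp only [mul_zero] at h2
      rw [← mul_assoc, mul_comm ((m : ZMod n))⁻¹, hMinv, one_mul] at h2
      exact h2
    have e5 : lmul n m (some ((m : ZMod n) * ((m : ZMod n) - ((m : ZMod n) - 1) * y)))
        (some 0)
        = some (-(((m : ZMod n) - 1) *
            ((m : ZMod n) * ((m : ZMod n) - ((m : ZMod n) - 1) * y)))) := by
      simp only [lmul]
      rw [if_neg hMw]
      exact congrArg some (by ring)
    have e6 : lmul n m (some ((m : ZMod n) * y)) (some (-((m : ZMod n) - 1)))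
        = some ((m : ZMod n) * (-((m : ZMod n) - 1))
            - ((m : ZMod n) - 1) * ((m : ZMod n) * y)) := by
      simp only [lmul]
      rw [if_neg hy4]
    rw [e1, e2, e3, e4, e5, e6]
    intro h
    injection h with h
    have h3 : (((m : ZMod n) - 1) * (m : ZMod n)) * ((m : ZMod n) - 1)
        = (((m : ZMod n) - 1) * (m : ZMod n)) * ((m : ZMod n) * y) := by
      linear_combination h
    exact hy5 ((hKu.mul hMu).mul_left_cancel h3).symm
end

section
/- Let n > 3 be an odd integer. Then the class L_n contains no Bol loop: for every integer m with 1 < m < n, gcd(m, n) = 1 and gcd(m − 1, n) = 1, there exist x, y, z ∈ L_n(m) with ((x * y) * z) * y ≠ x * ((y * z) * y). -/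
/-- For odd `n > 3`, the class `L_n` contains no Bol loop: for every admissible
`m` there exist `x, y, z` with `((x*y)*z)*y ≠ x*((y*z)*y)`. -/
theorem stmt7 (n : ℕ) (hn : 3 < n) (hodd : Odd n) :
    ∀ m : ℕ, 1 < m → m < n → Nat.gcd m n = 1 → Nat.gcd (m - 1) n = 1 →
      ∃ x y z : Option (ZMod n),
        lmul n m (lmul n m (lmul n m x y) z) y ≠
          lmul n m x (lmul n m (lmul n m y z) y) := by
  intro m hm1 hmn hg1 hg2
  haveI : Fact (1 < n) := ⟨by omega⟩
  have hcast : ∀ k : ℕ, k < n → ((k : ZMod n) = 0 → k = 0) := by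
    intro k hk h
    have : n ∣ k := (ZMod.natCast_eq_zero_iff k n).mp h
    rcases this with ⟨c, rfl⟩
    rcases Nat.eq_zero_or_pos c with rfl | hc
    · simp
    · nlinarith
  have h2 : (2 : ZMod n) ≠ 0 := by
    intro h
    have : ((2:ℕ) : ZMod n) = 0 := by exact_mod_cast h
    have := hcast 2 (by omega) this
    omega
  have h3 : (3 : ZMod n) ≠ 0 := by
    intro h
    have : ((3:ℕ) : ZMod n) = 0 := by exact_mod_cast h
    have := hcast 3 (by omega) this
    omega
  by_cases hm2 : m = 2
  · subst hm2
    refine ⟨some 1, some 0, some 1, ?_⟩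
    have e1 : lmul n 2 (some 1) (some 0) = some (-1) := by
      simp [lmul, one_ne_zero]
      push_cast
      ring
    have e2 : lmul n 2 (some (-1)) (some 1) = some 3 := by
      have : (-1 : ZMod n) ≠ 1 := by
        intro h
        apply h2
        linear_combination -h
      simp [lmul, this]
      push_cast
      ring
    have e3 : lmul n 2 (some 3) (some 0) = some (-3) := by
      simp [lmul, h3]
      push_cast
      ring
    have f1 : lmul n 2 (some 0) (some 1) = some 2 := by
      simp [lmul, (zero_ne_one (α := ZMod n))]
    have f2 : lmul n 2 (some 2) (some 0) = some (-2) := by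
      simp [lmul, h2]
      push_cast
      ring
    have f3 : lmul n 2 (some 1) (some (-2)) = some (-5) := by
      have : (1 : ZMod n) ≠ -2 := by
        intro h
        apply h3
        linear_combination h
      simp [lmul, this]
      push_cast
      ring
    rw [e1, e2, e3, f1, f2, f3]
    intro h
    apply h2
    have := Option.some_injective _ h
    linear_combination this
  · -- m > 2
    have hm2' : 2 < m := by omega
    have hmne1 : (m : ZMod n) ≠ 1 := by
      intro h
      have : ((m:ℕ) : ZMod n) = ((1:ℕ) : ZMod n) := by exact_mod_cast h
      rw [ZMod.natCast_eq_natCast_iff'] at this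
      rw [Nat.mod_eq_of_lt hmn, Nat.mod_eq_of_lt (by omega)] at this
      omega
    have hmne2 : (m : ZMod n) ≠ 2 := by
      intro h
      have : ((m:ℕ) : ZMod n) = ((2:ℕ) : ZMod n) := by exact_mod_cast h
      rw [ZMod.natCast_eq_natCast_iff'] at this
      rw [Nat.mod_eq_of_lt hmn, Nat.mod_eq_of_lt (by omega)] at this
      omega
    have hmu : IsUnit (m : ZMod n) := (ZMod.isUnit_iff_coprime m n).mpr hg1
    refine ⟨some 0, some 1, none, ?_⟩
    have e1 : lmul n m (some 0) (some 1) = some (m : ZMod n) := by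
      simp [lmul, (zero_ne_one (α := ZMod n))]
    have e2 : lmul n m (some (m : ZMod n)) none = some (m : ZMod n) := rfl
    have e3 : lmul n m (some (m : ZMod n)) (some 1) =
        some ((m : ZMod n) * (2 - m)) := by
      simp [lmul, hmne1]
      ring
    have f1 : lmul n m (some 1) none = some 1 := rfl
    have f2 : lmul n m (some 1) (some 1) = none := by simp [lmul]
    have f3 : lmul n m (some 0) none = some 0 := rfl
    rw [e1, e2, e3, f1, f2, f3]
    intro h
    have h0 : (m : ZMod n) * (2 - m) = 0 := Option.some_injective _ h
    have h' : (2 - (m : ZMod n)) = 0 := (hmu.mul_right_eq_zero).mp h0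
    apply hmne2
    linear_combination -h'
end

section
/- Let n > 3 be an odd integer. Then the class L_n contains no Bruck loop: for every integer m with 1 < m < n, gcd(m, n) = 1 and gcd(m − 1, n) = 1, there exist x, y, z ∈ L_n(m) with (x * (y * x)) * z ≠ x * (y * (x * z)). (Since every element of L_n(m) is its own inverse, the inverse condition (x * y)^{-1} = x^{-1} * y^{-1} in the definition of a Bruck loop holds automatically, so failure of the displayed identity is exactly failure of the Bruck property.) -/
/-- For odd `n > 3`, the class `L_n` contains no Bruck loop: for every admissible
`m` there exist `x, y, z` with `(x*(y*x))*z ≠ x*(y*(x*z))`.  (The inverse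
condition in the definition of a Bruck loop holds automatically, since every
element of `L_n(m)` is its own inverse.) -/
theorem stmt8 (n : ℕ) (hn : 3 < n) (hodd : Odd n) :
    ∀ m : ℕ, 1 < m → m < n → Nat.gcd m n = 1 → Nat.gcd (m - 1) n = 1 →
      ∃ x y z : Option (ZMod n),
        lmul n m (lmul n m x (lmul n m y x)) z ≠
          lmul n m x (lmul n m y (lmul n m x z)) := by
  intro m hm1 hmn hg1 hg2
  haveI : Fact (1 < n) := ⟨by omega⟩
  haveI : NeZero n := ⟨by omega⟩
  have hdvd : ∀ k : ℕ, 0 < k → k < n → (k : ZMod n) ≠ 0 := by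
    intro k hk1 hk2 h
    have := (ZMod.natCast_eq_zero_iff k n).mp h
    have := Nat.le_of_dvd hk1 this
    omega
  have h2 : (2 : ZMod n) ≠ 0 := by
    have := hdvd 2 (by norm_num) (by omega)
    simpa using this
  have h3 : (3 : ZMod n) ≠ 0 := by
    have := hdvd 3 (by norm_num) (by omega)
    simpa using this
  have hm0 : (m : ZMod n) ≠ 0 := hdvd m (by omega) hmn
  set k : ZMod n := (m : ZMod n) with hk
  have hu : IsUnit (k - 1) := by
    have : IsUnit ((m - 1 : ℕ) : ZMod n) := by
      exact (ZMod.isUnit_iff_coprime (m-1) n).mpr hg2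
    rwa [Nat.cast_sub (by omega), Nat.cast_one] at this
  by_cases hc : k + 1 = 0
  · -- k = -1
    have hk1 : k = -1 := by linear_combination hc
    refine ⟨some 0, some 1, some 1, ?_⟩
    have e1 : lmul n m (some 1) (some 0) = some 2 := by
      simp only [lmul, if_neg (show (1:ZMod n) ≠ 0 from one_ne_zero)]
      rw [← hk, hk1]; ring_nf
    have e2 : lmul n m (some 0) (some 2) = some (-2) := by
      simp only [lmul, if_neg (show (0:ZMod n) ≠ 2 from fun h => h2 h.symm)]
      rw [← hk, hk1]; ring_nf
    have e3 : lmul n m (some (-2)) (some 1) = some (-5) := by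
      have hne : (-2 : ZMod n) ≠ 1 := by
        intro h; apply h3; linear_combination -h
      simp only [lmul, if_neg hne]
      rw [← hk, hk1]; ring_nf
    have e4 : lmul n m (some 0) (some 1) = some (-1) := by
      simp only [lmul, if_neg (show (0:ZMod n) ≠ 1 from fun h => one_ne_zero h.symm)]
      rw [← hk, hk1]; ring_nf
    have e5 : lmul n m (some 1) (some (-1)) = some 3 := by
      have hne : (1 : ZMod n) ≠ -1 := by
        intro h; apply h2; linear_combination h
      simp only [lmul, if_neg hne]
      rw [← hk, hk1]; ring_nf
    have e6 : lmul n m (some 0) (some 3) = some (-3) := by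
      simp only [lmul, if_neg (show (0:ZMod n) ≠ 3 from fun h => h3 h.symm)]
      rw [← hk, hk1]; ring_nf
    rw [e1, e2, e3, e4, e5, e6]
    intro h
    apply h2
    have := Option.some_injective _ h
    linear_combination -this
  · -- k + 1 ≠ 0
    refine ⟨some 0, none, some 1, ?_⟩
    have e1 : lmul n m (lmul n m (some 0) (lmul n m none (some 0))) (some 1)
        = some 1 := by
      simp [lmul]
    have e2 : lmul n m (some 0) (some 1) = some k := by
      simp only [lmul, if_neg (show (0:ZMod n) ≠ 1 from fun h => one_ne_zero h.symm)]
      rw [← hk]; ring_nf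
    have e3 : lmul n m (some 0) (some k) = some (k * k) := by
      simp only [lmul, if_neg (show (0:ZMod n) ≠ k from fun h => hm0 h.symm)]
      rw [← hk]; ring_nf
    rw [e1]
    show some (1 : ZMod n) ≠ _
    rw [e2]
    show _ ≠ lmul n m (some 0) (some k)
    rw [e3]
    intro h
    have h' : (1 : ZMod n) = k * k := Option.some_injective _ h
    have : (k - 1) * (k + 1) = 0 := by linear_combination -h'
    exact hc ((IsUnit.mul_right_eq_zero hu).mp this)
end

section
/- Let n > 3 be an odd integer and let m be an integer with 1 < m < n, gcd(m, n) = 1 and gcd(m − 1, n) = 1. Then the associator subloop of L_n(m) is the whole loop: A(L_n(m)) = L_n(m). Equivalently, the only subset of L_n(m) that contains every associator (x, y, z) for x, y, z ∈ L_n(m) and is closed under the operation * is L_n(m) itself. -/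
/-- For odd `n > 3` and admissible `m`, the associator subloop of `L_n(m)` is the
whole loop: any subset `S` of `L_n(m)` which contains every associator
(i.e. every `w` with `(x*y)*z = (x*(y*z))*w`) and is closed under the loop
operation must be all of `L_n(m)`. -/
theorem stmt10 (n m : ℕ) (hn : 3 < n) (hodd : Odd n) (hm1 : 1 < m) (hm2 : m < n)
    (hg1 : Nat.gcd m n = 1) (hg2 : Nat.gcd (m - 1) n = 1) :
    ∀ S : Set (Option (ZMod n)),
      (∀ x y z w : Option (ZMod n),
          lmul n m (lmul n m x y) z = lmul n m (lmul n m x (lmul n m y z)) w →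
          w ∈ S) →
      (∀ a ∈ S, ∀ b ∈ S, lmul n m a b ∈ S) →
      S = Set.univ := by
  intro S h1 _h2
  haveI : NeZero n := ⟨by omega⟩
  haveI : Fact (1 < n) := ⟨by omega⟩
  have hn5 : 5 ≤ n := by
    obtain ⟨k, hk⟩ := hodd; omega
  have hM : IsUnit ((m : ZMod n)) := by
    rw [ZMod.isUnit_iff_coprime]; exact hg1
  have hK : IsUnit ((m : ZMod n) - 1) := by
    have hcast : (m : ZMod n) - 1 = ((m - 1 : ℕ) : ZMod n) := by
      rw [Nat.cast_sub (by omega : 1 ≤ m), Nat.cast_one]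
    rw [hcast, ZMod.isUnit_iff_coprime]; exact hg2
  have hMK : IsUnit ((m : ZMod n) * ((m : ZMod n) - 1)) := hM.mul hK
  -- existence of an element avoiding 4 given ones
  have havoid : ∀ x1 x2 x3 x4 : ZMod n,
      ∃ a : ZMod n, a ≠ x1 ∧ a ≠ x2 ∧ a ≠ x3 ∧ a ≠ x4 := by
    intro x1 x2 x3 x4
    by_contra h
    have hall : ∀ a : ZMod n, a = x1 ∨ a = x2 ∨ a = x3 ∨ a = x4 := by
      intro a
      by_contra h'
      push_neg at h'
      exact h ⟨a, h'.1, h'.2.1, h'.2.2.1, h'.2.2.2⟩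
    have hsub : (Finset.univ : Finset (ZMod n)) ⊆ {x1, x2, x3, x4} := by
      intro a _
      simp only [Finset.mem_insert, Finset.mem_singleton]
      exact hall a
    have hcard := Finset.card_le_card hsub
    rw [Finset.card_univ, ZMod.card] at hcard
    have h4 : ({x1, x2, x3, x4} : Finset (ZMod n)).card ≤ 4 := by
      refine le_trans (Finset.card_insert_le _ _) ?_
      refine Nat.succ_le_succ (le_trans (Finset.card_insert_le _ _) ?_)
      refine Nat.succ_le_succ (le_trans (Finset.card_insert_le _ _) ?_)
      exact Nat.succ_le_succ (Finset.card_singleton _).le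
    omega
  apply Set.eq_univ_of_forall
  intro x
  match x with
  | none =>
      exact h1 none none none none rfl
  | some t =>
      -- choose c ≠ t
      obtain ⟨c, hc⟩ := exists_ne t
      -- solve for b :  (1 + (M-1)M)·c − M(M-1)·b = t
      obtain ⟨b, ht⟩ : ∃ b : ZMod n,
          (1 + ((m : ZMod n) - 1) * (m : ZMod n)) * c
            - (m : ZMod n) * ((m : ZMod n) - 1) * b = t := by
        refine ⟨((m : ZMod n) * ((m : ZMod n) - 1))⁻¹ *
          ((1 + ((m : ZMod n) - 1) * (m : ZMod n)) * c - t), ?_⟩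
        rw [← mul_assoc, ZMod.mul_inv_of_unit _ hMK, one_mul]
        ring
      -- b ≠ c
      have hbc : b ≠ c := by
        intro h
        apply hc
        linear_combination ht + ((m : ZMod n) * ((m : ZMod n) - 1)) * h
      -- choose a avoiding bad values
      obtain ⟨a, ha1, ha2, ha3, ha4⟩ :=
        havoid b c (((m : ZMod n) - 1)⁻¹ * ((m : ZMod n) * b - c))
          ((m : ZMod n) * c - ((m : ZMod n) - 1) * b)
      have hab : a ≠ b := ha1
      have hP : (m : ZMod n) * b - ((m : ZMod n) - 1) * a ≠ c := by
        intro h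
        apply ha3
        have hKa : ((m : ZMod n) - 1) * a = (m : ZMod n) * b - c := by
          linear_combination -h
        have h2 : (((m : ZMod n) - 1))⁻¹ * (((m : ZMod n) - 1) * a)
            = (((m : ZMod n) - 1))⁻¹ * ((m : ZMod n) * b - c) := by rw [hKa]
        rwa [← mul_assoc, ZMod.inv_mul_of_unit _ hK, one_mul] at h2
      have hQ : a ≠ (m : ZMod n) * c - ((m : ZMod n) - 1) * b := ha4
      have hR : (m : ZMod n) * ((m : ZMod n) * c - ((m : ZMod n) - 1) * b)
          - ((m : ZMod n) - 1) * a ≠ t := by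
        intro h
        apply ha2
        have hKa : ((m : ZMod n) - 1) * a = ((m : ZMod n) - 1) * c := by
          linear_combination ht - h
        have h2 : (((m : ZMod n) - 1))⁻¹ * (((m : ZMod n) - 1) * a)
            = (((m : ZMod n) - 1))⁻¹ * (((m : ZMod n) - 1) * c) := by rw [hKa]
        rwa [← mul_assoc, ZMod.inv_mul_of_unit _ hK, one_mul, ← mul_assoc,
          ZMod.inv_mul_of_unit _ hK, one_mul] at h2
      -- the associator identity
      refine h1 (some a) (some b) (some c) (some t) ?_
      show lmul n m (lmul n m (some a) (some b)) (some c)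
          = lmul n m (lmul n m (some a) (lmul n m (some b) (some c))) (some t)
      have e1 : lmul n m (some a) (some b)
          = some ((m : ZMod n) * b - ((m : ZMod n) - 1) * a) := by
        simp only [lmul, if_neg hab]
      have e2 : lmul n m (some b) (some c)
          = some ((m : ZMod n) * c - ((m : ZMod n) - 1) * b) := by
        simp only [lmul, if_neg hbc]
      rw [e1, e2]
      have e3 : lmul n m (some ((m : ZMod n) * b - ((m : ZMod n) - 1) * a)) (some c)
          = some ((m : ZMod n) * c - ((m : ZMod n) - 1)
              * ((m : ZMod n) * b - ((m : ZMod n) - 1) * a)) := by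
        simp only [lmul, if_neg hP]
      have e4 : lmul n m (some a)
            (some ((m : ZMod n) * c - ((m : ZMod n) - 1) * b))
          = some ((m : ZMod n) * ((m : ZMod n) * c - ((m : ZMod n) - 1) * b)
              - ((m : ZMod n) - 1) * a) := by
        simp only [lmul, if_neg hQ]
      rw [e3, e4]
      have e5 : lmul n m
            (some ((m : ZMod n) * ((m : ZMod n) * c - ((m : ZMod n) - 1) * b)
              - ((m : ZMod n) - 1) * a)) (some t)
          = some ((m : ZMod n) * t - ((m : ZMod n) - 1)
              * ((m : ZMod n) * ((m : ZMod n) * c - ((m : ZMod n) - 1) * b)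
                - ((m : ZMod n) - 1) * a)) := by
        simp only [lmul, if_neg hR]
      rw [e5]
      congr 1
      linear_combination (m : ZMod n) * ht
end

section
/- Let n ≥ 3 and let t, u ∈ Z_n \ {0} with t ≠ u and gcd(t, u) = 1. The groupoid Z_n(t, u) is a semigroup (i.e., the operation a * b = (ta + ub) mod n is associative) if and only if t² ≡ t (mod n) and u² ≡ u (mod n). -/
/-- The groupoid `Z_n(t, u)`: the set `Z_n = {0, 1, …, n-1}` (modeled as
`ZMod n`) with the binary operation `a * b = (t·a + u·b) mod n`. -/
def gmul (n t u : ℕ) (a b : ZMod n) : ZMod n :=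
  (t : ZMod n) * a + (u : ZMod n) * b

/-- For `n ≥ 3` and `t, u ∈ Z_n \\ {0}` with `t ≠ u` and `gcd(t,u) = 1`, the
groupoid `Z_n(t,u)` is a semigroup (the operation is associative) iff
`t² ≡ t (mod n)` and `u² ≡ u (mod n)`. -/
theorem stmt11 (n t u : ℕ) (hn : 3 ≤ n) (ht0 : 0 < t) (htn : t < n)
    (hu0 : 0 < u) (hun : u < n) (htu : t ≠ u) (hg : Nat.gcd t u = 1) :
    (∀ a b c : ZMod n,
        gmul n t u (gmul n t u a b) c = gmul n t u a (gmul n t u b c)) ↔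
      (t ^ 2 ≡ t [MOD n] ∧ u ^ 2 ≡ u [MOD n]) := by
  have hmodt : (t ^ 2 ≡ t [MOD n]) ↔ ((t : ZMod n) ^ 2 = (t : ZMod n)) := by
    rw [← ZMod.natCast_eq_natCast_iff]; push_cast; rfl
  have hmodu : (u ^ 2 ≡ u [MOD n]) ↔ ((u : ZMod n) ^ 2 = (u : ZMod n)) := by
    rw [← ZMod.natCast_eq_natCast_iff]; push_cast; rfl
  rw [hmodt, hmodu]
  constructor
  · intro h
    constructor
    · have := h 1 0 0
      simpa [gmul, sq] using this
    · have := h 0 0 1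
      simp only [gmul, mul_zero, add_zero, zero_add, mul_one] at this
      rw [sq]
      linear_combination -this
  · intro ⟨h1, h2⟩ a b c
    simp only [gmul]
    rw [sq] at h1 h2
    linear_combination a * h1 - c * h2
end
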